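/- If Z^a and Z^b are n×n sectorial matrices with phases in [α, β] where β − α < π, then the series-connected impedance Z^c = Z^a + Z^b is sectorial with phases in [α, β]. -/

import Mathlib

open Matrix Complex

noncomputable section

/-- The numerical range of a complex square matrix. -/
def numRange {ι : Type*} [Fintype ι] (C : Matrix ι ι ℂ) : Set ℂ :=
  {z | ∃ x : ι → ℂ, star x ⬝ᵥ x = 1 ∧ star x ⬝ᵥ C.mulVec x = z}

/-- A matrix is sectorial if its numerical range does not contain 0. -/
def Sectorial {ι : Type*} [Fintype ι] (C : Matrix ι ι ℂ) : Prop :=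
  (0 : ℂ) ∉ numRange C

/-- `PhasesIn C α β` : `C` admits a sectorial decomposition `C = Tᴴ D T` with `T`
invertible and `D` diagonal unitary whose diagonal entries have arguments in `[α, β]`. -/
def PhasesIn {ι : Type*} [Fintype ι] [DecidableEq ι] (C : Matrix ι ι ℂ) (α β : ℝ) : Prop :=
  ∃ T D : Matrix ι ι ℂ, IsUnit T ∧ D.IsDiag ∧ C = Tᴴ * D * T ∧
    ∀ i, ∃ θ : ℝ, α ≤ θ ∧ θ ≤ β ∧ D i i = Complex.exp ((θ : ℂ) * Complex.I)

/-- `C ∈ Z[α, β]` : sectorial with all phases in `[α, β]`. -/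
def MemZ {ι : Type*} [Fintype ι] [DecidableEq ι] (C : Matrix ι ι ℂ) (α β : ℝ) : Prop :=
  Sectorial C ∧ PhasesIn C α β

/-- The closed sector `{r e^{jθ} : r ≥ 0, α ≤ θ ≤ β}` in the complex plane. -/
def sector (α β : ℝ) : Set ℂ :=
  {z | ∃ r θ : ℝ, 0 ≤ r ∧ α ≤ θ ∧ θ ≤ β ∧ z = (r : ℂ) * Complex.exp ((θ : ℂ) * Complex.I)}

/-!
For an aperture `β - α < π`, a matrix lies in `Z[α, β]` exactly when `x ↦ xᴴ C x` maps nonzero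
vectors into the punctured sector `sector α β \ {0}`. One way, a decomposition `C = Tᴴ D T` writes
`xᴴ C x` as a nonnegative combination of the phases `e^{iθₖ}`, not all coefficients zero. The other
way, rotating by the bisector `(α + β) / 2` makes `C` strictly accretive, hence congruent to a
diagonal matrix (its Hermitian part is positive definite), and the diagonal entries are values of
the quadratic form, so they lie in the punctured sector. That set is closed under addition since
the aperture is below `π`, so the condition passes from `Za` and `Zb` to `Za + Zb`.
-/

open scoped ComplexOrder MatrixOrder Real

section Sector

variable {α β : ℝ}

lemma exp_mul_I_mul_ofReal_mul_exp_mul_I (t r θ : ℝ) :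
    cexp (t * I) * (r * cexp (θ * I)) = r * cexp ((t + θ : ℝ) * I) := by
  push_cast
  rw [add_mul, Complex.exp_add]
  ring

lemma re_exp_mul_I_mul_ofReal_mul_exp_mul_I (t r θ : ℝ) :
    (cexp (t * I) * (r * cexp (θ * I))).re = r * Real.cos (t + θ) := by
  rw [exp_mul_I_mul_ofReal_mul_exp_mul_I, re_ofReal_mul, exp_ofReal_mul_I_re]

lemma im_exp_mul_I_mul_ofReal_mul_exp_mul_I (t r θ : ℝ) :
    (cexp (t * I) * (r * cexp (θ * I))).im = r * Real.sin (t + θ) := by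
  rw [exp_mul_I_mul_ofReal_mul_exp_mul_I, im_ofReal_mul, exp_ofReal_mul_I_im]

lemma zero_mem_sector (hle : α ≤ β) : (0 : ℂ) ∈ sector α β :=
  ⟨0, α, le_rfl, le_rfl, hle, by simp⟩

lemma le_of_mem_sector {z : ℂ} (hz : z ∈ sector α β) : α ≤ β := by
  obtain ⟨r, θ, -, hαθ, hθβ, -⟩ := hz
  exact hαθ.trans hθβ

/-- The third half-plane is needed only when `α = β`, where the first two meet in a whole line. -/
lemma mem_sector_iff (hle : α ≤ β) (hlt : β - α < π) {z : ℂ} :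
    z ∈ sector α β ↔ 0 ≤ (cexp ((-α : ℝ) * I) * z).im ∧ (cexp ((-β : ℝ) * I) * z).im ≤ 0 ∧
      0 ≤ (cexp ((-((α + β) / 2) : ℝ) * I) * z).re := by
  constructor
  · rintro ⟨r, θ, hr, hαθ, hθβ, rfl⟩
    simp only [re_exp_mul_I_mul_ofReal_mul_exp_mul_I, im_exp_mul_I_mul_ofReal_mul_exp_mul_I]
    refine ⟨mul_nonneg hr (Real.sin_nonneg_of_nonneg_of_le_pi (by linarith) (by linarith)),
      mul_nonpos_of_nonneg_of_nonpos hr ?_,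
      mul_nonneg hr (Real.cos_nonneg_of_mem_Icc ⟨by linarith, by linarith⟩)⟩
    rw [← neg_neg (-β + θ), Real.sin_neg, neg_nonpos]
    exact Real.sin_nonneg_of_nonneg_of_le_pi (by linarith) (by linarith)
  · rintro ⟨hα, hβ, hγ⟩
    set w := cexp ((-((α + β) / 2) : ℝ) * I) * z
    have hw : z = ‖z‖ * cexp (((α + β) / 2 + w.arg : ℝ) * I) := by
      have hzw : z = cexp (((α + β) / 2 : ℝ) * I) * w := by
        simp [w, ← mul_assoc, ← Complex.exp_add]
      have hnorm : ‖w‖ = ‖z‖ := by rw [norm_mul, norm_exp_ofReal_mul_I, one_mul]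
      rw [← exp_mul_I_mul_ofReal_mul_exp_mul_I, ← hnorm, norm_mul_exp_arg_mul_I, ← hzw]
    rcases eq_or_ne z 0 with rfl | hz0
    · exact zero_mem_sector hle
    have hz : 0 < ‖z‖ := norm_pos_iff.2 hz0
    have harg := abs_le.1 (abs_arg_le_pi_div_two_iff.2 hγ)
    rw [hw, im_exp_mul_I_mul_ofReal_mul_exp_mul_I] at hα hβ
    have hlo : 0 ≤ -α + ((α + β) / 2 + w.arg) := by
      by_contra! hneg
      linarith [mul_pos hz (neg_pos.2 (Real.sin_neg_of_neg_of_neg_pi_lt hneg (by linarith)))]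
    have hhi : -β + ((α + β) / 2 + w.arg) ≤ 0 := by
      by_contra! hpos
      linarith [mul_pos hz (Real.sin_pos_of_pos_of_lt_pi hpos (by linarith))]
    exact ⟨‖z‖, (α + β) / 2 + w.arg, hz.le, by linarith, by linarith, hw⟩

lemma add_mem_sector (hlt : β - α < π) {z w : ℂ} (hz : z ∈ sector α β) (hw : w ∈ sector α β) :
    z + w ∈ sector α β := by
  have hle := le_of_mem_sector hz
  rw [mem_sector_iff hle hlt] at *
  obtain ⟨hz₁, hz₂, hz₃⟩ := hz
  obtain ⟨hw₁, hw₂, hw₃⟩ := hw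
  simp only [mul_add, add_re, add_im]
  exact ⟨by linarith, by linarith, by linarith⟩

lemma re_pos_of_mem_sector (hlt : β - α < π) {z : ℂ} (hz : z ∈ sector α β) (hz0 : z ≠ 0) :
    0 < (cexp ((-((α + β) / 2) : ℝ) * I) * z).re := by
  obtain ⟨r, θ, hr, hαθ, hθβ, rfl⟩ := hz
  have hr0 : r ≠ 0 := by rintro rfl; simp at hz0
  rw [re_exp_mul_I_mul_ofReal_mul_exp_mul_I]
  exact mul_pos (hr.lt_of_ne' hr0) (Real.cos_pos_of_mem_Ioo ⟨by linarith, by linarith⟩)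

lemma add_mem_sector_diff_zero (hlt : β - α < π) {z w : ℂ} (hz : z ∈ sector α β \ {0})
    (hw : w ∈ sector α β) : z + w ∈ sector α β \ {0} := by
  refine ⟨add_mem_sector hlt hz.1 hw, fun hzw => ?_⟩
  have hw_re := ((mem_sector_iff (le_of_mem_sector hw) hlt).1 hw).2.2
  have hz_re := re_pos_of_mem_sector hlt hz.1 hz.2
  rw [eq_neg_of_add_eq_zero_left hzw, mul_neg, neg_re] at hz_re
  linarith

lemma sum_mem_sector_diff_zero {ι : Type*} [DecidableEq ι] (hlt : β - α < π) {s : Finset ι}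
    {f : ι → ℂ} (hf : ∀ i ∈ s, f i ∈ sector α β) {i : ι} (hi : i ∈ s) (hfi : f i ≠ 0) :
    ∑ j ∈ s, f j ∈ sector α β \ {0} := by
  rw [← Finset.add_sum_erase s f hi]
  refine add_mem_sector_diff_zero hlt ⟨hf i hi, hfi⟩ ?_
  exact Finset.sum_induction _ (· ∈ sector α β) (fun _ _ => add_mem_sector hlt)
    (zero_mem_sector (le_of_mem_sector (hf i hi))) fun j hj => hf j (Finset.mem_of_mem_erase hj)

end Sector

section QuadraticForm

variable {ι : Type*} [Fintype ι]

lemma dotProduct_mulVec_conjTranspose_mul_mul {R : Type*} [CommSemiring R] [StarRing R]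
    (T D : Matrix ι ι R) (x : ι → R) :
    star x ⬝ᵥ (Tᴴ * D * T) *ᵥ x = star (T *ᵥ x) ⬝ᵥ D *ᵥ (T *ᵥ x) := by
  rw [star_mulVec, ← dotProduct_mulVec, mulVec_mulVec, mulVec_mulVec]

lemma star_dotProduct_diagonal_mulVec [DecidableEq ι] (d y : ι → ℂ) :
    star y ⬝ᵥ diagonal d *ᵥ y = ∑ i, (normSq (y i) : ℂ) * d i := by
  simp only [dotProduct, mulVec_diagonal, Pi.star_apply, ← mul_conj, star_def]
  exact Finset.sum_congr rfl fun i _ => by ring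

lemma dotProduct_mulVec_realPart (A : Matrix ι ι ℂ) (x : ι → ℂ) :
    star x ⬝ᵥ (realPart A : Matrix ι ι ℂ) *ᵥ x = (star x ⬝ᵥ A *ᵥ x).re := by
  have hadj : star x ⬝ᵥ Aᴴ *ᵥ x = star (star x ⬝ᵥ A *ᵥ x) := by
    rw [star_dotProduct x, star_mulVec, conjTranspose_conjTranspose, ← dotProduct_mulVec]
  rw [realPart_apply_coe, smul_mulVec, add_mulVec, dotProduct_smul, dotProduct_add,
    star_eq_conjTranspose, hadj, star_def, re_eq_add_conj, real_smul]
  push_cast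
  ring

end QuadraticForm

section Congruence

variable {ι : Type*} [Fintype ι] [DecidableEq ι]

/-- With `P = √H`, diagonalise `P⁻¹ K P⁻¹` unitarily. -/
lemma Matrix.PosDef.exists_simultaneous_diagonalization {𝕜 : Type*} [RCLike 𝕜]
    {H K : Matrix ι ι 𝕜} (hH : H.PosDef) (hK : K.IsHermitian) :
    ∃ T : Matrix ι ι 𝕜, IsUnit T ∧ H = Tᴴ * T ∧
      ∃ μ : ι → ℝ, K = Tᴴ * diagonal (fun i => (μ i : 𝕜)) * T := by
  set P := CFC.sqrt H
  have hP : Pᴴ = P := (CFC.sqrt_nonneg H).posSemidef.isHermitian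
  have hPP : P * P = H := CFC.sqrt_mul_sqrt_self H hH.posSemidef.nonneg
  have hPu : IsUnit P := CFC.isUnit_sqrt_iff_isStrictlyPositive.2 hH.isStrictlyPositive
  have hPdet : IsUnit P.det := (isUnit_iff_isUnit_det P).1 hPu
  have hK' : (P⁻¹ * K * P⁻¹).IsHermitian := by
    simpa [conjTranspose_nonsing_inv, hP] using isHermitian_conjTranspose_mul_mul P⁻¹ hK
  obtain ⟨U, μ, hspec⟩ : ∃ (U : unitaryGroup ι 𝕜) (μ : ι → ℝ),
      P⁻¹ * K * P⁻¹ = U * diagonal (fun i => (μ i : 𝕜)) * star (U : Matrix ι ι 𝕜) :=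
    ⟨_, _, hK'.spectral_theorem.trans (Unitary.conjStarAlgAut_apply _ _)⟩
  have hTH : (star (U : Matrix ι ι 𝕜) * P)ᴴ = P * U := by
    rw [conjTranspose_mul, hP, star_eq_conjTranspose, conjTranspose_conjTranspose]
  refine ⟨star (U : Matrix ι ι 𝕜) * P, Unitary.isUnit_coe.star.mul hPu, ?_, μ, ?_⟩
  · rw [hTH, ← hPP, mul_assoc, ← mul_assoc (U : Matrix ι ι 𝕜), Unitary.mul_star_self_of_mem U.2,
      one_mul]
  · calc K = P * (P⁻¹ * K * P⁻¹) * P := by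
          rw [← mul_assoc, ← mul_assoc, mul_nonsing_inv _ hPdet, one_mul,
            nonsing_inv_mul_cancel_right _ _ hPdet]
      _ = _ := by rw [hspec, hTH]; simp only [mul_assoc]

lemma exists_eq_conjTranspose_mul_diagonal_mul_of_re_pos {A : Matrix ι ι ℂ}
    (hA : ∀ x ≠ 0, 0 < (star x ⬝ᵥ A *ᵥ x).re) :
    ∃ T : Matrix ι ι ℂ, IsUnit T ∧ ∃ d : ι → ℂ, A = Tᴴ * diagonal d * T := by
  have hH : (realPart A : Matrix ι ι ℂ).PosDef := by
    refine .of_dotProduct_mulVec_pos (realPart A).2 fun x hx => ?_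
    rw [dotProduct_mulVec_realPart]
    exact zero_lt_real.2 (hA x hx)
  obtain ⟨T, hT, hHT, μ, hKT⟩ := hH.exists_simultaneous_diagonalization (imaginaryPart A).2
  simp only [RCLike.ofReal_eq_complex_ofReal] at hKT
  have hdiag : diagonal (fun i => 1 + I * μ i) = 1 + I • diagonal fun i => (μ i : ℂ) := by
    rw [← diagonal_one, ← diagonal_smul, ← diagonal_add]
    rfl
  refine ⟨T, hT, fun i => 1 + I * μ i, ?_⟩
  rw [hdiag, mul_add, add_mul, mul_one, Matrix.mul_smul, Matrix.smul_mul, ← hHT, ← hKT,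
    realPart_add_I_smul_imaginaryPart]

lemma exists_dotProduct_mulVec_eq_of_eq_conjTranspose_mul_diagonal_mul {C T : Matrix ι ι ℂ}
    {d : ι → ℂ} (hT : IsUnit T) (hC : C = Tᴴ * diagonal d * T) (k : ι) :
    ∃ x ≠ 0, star x ⬝ᵥ C *ᵥ x = d k := by
  have hTx : T *ᵥ (T⁻¹ *ᵥ Pi.single k 1) = Pi.single k 1 := by
    rw [mulVec_mulVec, mul_nonsing_inv _ ((isUnit_iff_isUnit_det T).1 hT), one_mulVec]
  refine ⟨T⁻¹ *ᵥ Pi.single k 1, fun h0 => ?_, ?_⟩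
  · simpa [h0] using congrFun hTx k
  · rw [hC, dotProduct_mulVec_conjTranspose_mul_mul, hTx]
    simp

lemma phasesIn_of_eq_conjTranspose_mul_diagonal_mul {C T : Matrix ι ι ℂ} {d : ι → ℂ} {α β : ℝ}
    (hT : IsUnit T) (hC : C = Tᴴ * diagonal d * T) (hd : ∀ k, d k ∈ sector α β \ {0}) :
    PhasesIn C α β := by
  choose r θ hr hαθ hθβ hdk using fun k => (hd k).1
  have hr0 : ∀ k, 0 < r k := fun k =>
    (hr k).lt_of_ne' fun h => (hd k).2 (by simp [hdk k, h])
  set S : Matrix ι ι ℂ := diagonal fun k => (√(r k) : ℂ)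
  refine ⟨S * T, diagonal fun k => cexp (θ k * I), ?_, isDiag_diagonal _, ?_,
    fun k => ⟨θ k, hαθ k, hθβ k, diagonal_apply_eq _ _⟩⟩
  · refine (isUnit_diagonal.2 ?_).mul hT
    exact Pi.isUnit_iff.2 fun k => (ofReal_ne_zero.2 (Real.sqrt_pos.2 (hr0 k)).ne').isUnit
  · have hS : Sᴴ = S := by simp [S, diagonal_conjTranspose, conj_ofReal]
    have hSDS : S * diagonal (fun k => cexp (θ k * I)) * S = diagonal d := by
      rw [diagonal_mul_diagonal, diagonal_mul_diagonal]
      congr 1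
      funext k
      rw [hdk k, mul_right_comm, ← ofReal_mul, Real.mul_self_sqrt (hr k)]
    rw [hC, conjTranspose_mul, hS, ← hSDS]
    simp only [mul_assoc]

end Congruence

section Phases

variable {ι : Type*} [Fintype ι] {C : Matrix ι ι ℂ} {α β : ℝ}

lemma sectorial_of_dotProduct_mulVec_ne_zero (h : ∀ x ≠ 0, star x ⬝ᵥ C *ᵥ x ≠ 0) :
    Sectorial C := by
  rintro ⟨x, hx1, hx0⟩
  refine h x (fun hx => ?_) hx0
  simp [hx] at hx1

variable [DecidableEq ι]

lemma PhasesIn.dotProduct_mulVec_mem_sector (hlt : β - α < π) (h : PhasesIn C α β) {x : ι → ℂ}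
    (hx : x ≠ 0) : star x ⬝ᵥ C *ᵥ x ∈ sector α β \ {0} := by
  obtain ⟨T, D, hT, hD, rfl, hθ⟩ := h
  choose θ hαθ hθβ hDθ using hθ
  have hTx : T *ᵥ x ≠ 0 := by simpa using (mulVec_injective_of_isUnit hT).ne hx
  obtain ⟨i, hi⟩ := Function.ne_iff.1 hTx
  rw [← hD.diagonal_diag, dotProduct_mulVec_conjTranspose_mul_mul, star_dotProduct_diagonal_mulVec]
  refine sum_mem_sector_diff_zero hlt (fun j _ => ?_) (Finset.mem_univ i) ?_
  · exact ⟨_, θ j, normSq_nonneg _, hαθ j, hθβ j, by rw [diag_apply, hDθ j]⟩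
  · rw [diag_apply, hDθ i]
    exact mul_ne_zero (ofReal_ne_zero.2 (normSq_pos.2 hi).ne') (Complex.exp_ne_zero _)

lemma phasesIn_of_dotProduct_mulVec_mem_sector (hlt : β - α < π)
    (h : ∀ x ≠ 0, star x ⬝ᵥ C *ᵥ x ∈ sector α β \ {0}) : PhasesIn C α β := by
  set c := cexp ((-((α + β) / 2) : ℝ) * I)
  obtain ⟨T, hT, d, hd⟩ := exists_eq_conjTranspose_mul_diagonal_mul_of_re_pos (A := c • C)
    fun x hx => by
      rw [smul_mulVec, dotProduct_smul, smul_eq_mul]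
      exact re_pos_of_mem_sector hlt (h x hx).1 (h x hx).2
  have hC : C = Tᴴ * diagonal (c⁻¹ • d) * T := by
    rw [diagonal_smul, Matrix.mul_smul, Matrix.smul_mul, ← hd, smul_smul,
      inv_mul_cancel₀ (Complex.exp_ne_zero _), one_smul]
  refine phasesIn_of_eq_conjTranspose_mul_diagonal_mul hT hC fun k => ?_
  obtain ⟨x, hx, hxk⟩ := exists_dotProduct_mulVec_eq_of_eq_conjTranspose_mul_diagonal_mul hT hC k
  exact hxk ▸ h x hx

lemma memZ_of_dotProduct_mulVec_mem_sector (hlt : β - α < π)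
    (h : ∀ x ≠ 0, star x ⬝ᵥ C *ᵥ x ∈ sector α β \ {0}) : MemZ C α β :=
  ⟨sectorial_of_dotProduct_mulVec_ne_zero fun x hx => (h x hx).2,
    phasesIn_of_dotProduct_mulVec_mem_sector hlt h⟩

end Phases

theorem series_connection_preserves_phases {n : ℕ}
    (Za Zb : Matrix (Fin n) (Fin n) ℂ) (α β : ℝ)
    (hαβ : β - α < Real.pi) (ha : MemZ Za α β) (hb : MemZ Zb α β) :
    MemZ (Za + Zb) α β := by
  refine memZ_of_dotProduct_mulVec_mem_sector hαβ fun x hx => ?_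
  rw [add_mulVec, dotProduct_add]
  exact add_mem_sector_diff_zero hαβ (ha.2.dotProduct_mulVec_mem_sector hαβ hx)
    (hb.2.dotProduct_mulVec_mem_sector hαβ hx).1
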